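/- Let 0<β<1 and λ_q = 85⌈a^{b^q}⌉, δ_q = λ_q^{-2β} for a>1, b>1. If β < (b³+b²+b-1)/(2b³+b²-1) and a is sufficiently large (depending on b, β), then λ_{q-1}λ_q δ_{q-1}^{1/2} < λ_{q+1}λ_{q+2} δ_{q+1}^{-1/2} δ_{q+2} for all q ≥ 1. -/
import Mathlib


/-- The convex-integration frequency parameters `λ_q = 85⌈a^{b^q}⌉`. -/
noncomputable def lam (a b : ℝ) (q : ℕ) : ℝ := 85 * (⌈a ^ (b ^ q)⌉₊ : ℝ)

/-- The amplitudes `δ_q = λ_q^{-2β}`. -/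
noncomputable def del (a b β : ℝ) (q : ℕ) : ℝ := lam a b q ^ (-(2 * β))

lemma X_ge_two {a b : ℝ} (ha : 2 ≤ a) (hb : 1 ≤ b) (q : ℕ) : (2:ℝ) ≤ a ^ (b ^ q) := by
  have ha1 : (1:ℝ) ≤ a := by linarith
  calc (2:ℝ) ≤ a := ha
    _ = a ^ (1:ℝ) := (Real.rpow_one a).symm
    _ ≤ a ^ (b ^ q) := Real.rpow_le_rpow_of_exponent_le ha1 (one_le_pow₀ hb)

lemma lam_lower {a b : ℝ} (ha : 2 ≤ a) (hb : 1 ≤ b) (q : ℕ) :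
    a ^ (b ^ q) ≤ lam a b q := by
  have h1 := Nat.le_ceil (a ^ (b ^ q))
  have h2 : (0:ℝ) ≤ (⌈a ^ (b ^ q)⌉₊ : ℝ) := Nat.cast_nonneg _
  unfold lam; linarith

lemma lam_upper {a b : ℝ} (ha : 2 ≤ a) (hb : 1 ≤ b) (q : ℕ) :
    lam a b q ≤ 170 * a ^ (b ^ q) := by
  have hX := X_ge_two ha hb q
  have h1 : (⌈a ^ (b ^ q)⌉₊ : ℝ) < a ^ (b ^ q) + 1 := Nat.ceil_lt_add_one (by linarith)
  unfold lam; linarith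

lemma lam_pos {a b : ℝ} (ha : 2 ≤ a) (hb : 1 ≤ b) (q : ℕ) : 0 < lam a b q :=
  lt_of_lt_of_le (by linarith [X_ge_two ha hb q]) (lam_lower ha hb q)

private lemma rpow_sum3 {a : ℝ} (ha : 0 < a) (x y z : ℝ) :
    a ^ (x + y + z) = a ^ x * a ^ y * a ^ z := by
  rw [Real.rpow_add ha, Real.rpow_add ha]

/-- If `β < (b³+b²+b-1)/(2b³+b²-1)` then, for `a` sufficiently large,
`λ_{q-1} λ_q δ_{q-1}^{1/2} < λ_{q+1} λ_{q+2} δ_{q+1}^{-1/2} δ_{q+2}` for all `q ≥ 1`. -/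
theorem parameter_inequality_first (b β : ℝ) (hb : 1 < b) (hβ0 : 0 < β) (hβ1 : β < 1)
    (hβ : β < (b ^ 3 + b ^ 2 + b - 1) / (2 * b ^ 3 + b ^ 2 - 1)) :
    ∃ a₀ : ℝ, 1 < a₀ ∧ ∀ a : ℝ, a₀ ≤ a → ∀ q : ℕ, 1 ≤ q →
      lam a b (q - 1) * lam a b q * del a b β (q - 1) ^ ((1 : ℝ) / 2) <
        lam a b (q + 1) * lam a b (q + 2) * del a b β (q + 1) ^ (-(1 : ℝ) / 2) *
          del a b β (q + 2) := by
  have hb0 : (0:ℝ) < b := lt_trans one_pos hb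
  have hb1 : (1:ℝ) ≤ b := hb.le
  set ε : ℝ := (1 - 2*β)*b^3 + (1+β)*b^2 + β - b - 1 with hεdef
  have hεpos : 0 < ε := by
    have hD1 : (0:ℝ) < 2*b^3 + b^2 - 1 := by nlinarith
    have hD2 : (0:ℝ) < 2*b^3 - b^2 - 1 := by nlinarith
    have h1 : β * (2*b^3 + b^2 - 1) < b^3 + b^2 + b - 1 := by
      rw [lt_div_iff₀ hD1] at hβ; linarith
    rw [hεdef]
    nlinarith [mul_lt_mul_of_pos_right h1 hD2, hD1,
      mul_pos (mul_pos hb0 (sub_pos.mpr hb)) (show (0:ℝ) < b^3 - 1 by nlinarith)]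
  refine ⟨max 2 ((170:ℝ) ^ ((4:ℝ)/ε)), lt_of_lt_of_le one_lt_two (le_max_left _ _), ?_⟩
  intro a ha q hq
  have ha2 : (2:ℝ) ≤ a := le_trans (le_max_left _ _) ha
  have ha1 : (1:ℝ) < a := lt_of_lt_of_le one_lt_two ha2
  have ha0 : (0:ℝ) < a := lt_trans one_pos ha1
  obtain ⟨n, rfl⟩ : ∃ n, q = n + 1 := ⟨q - 1, (Nat.succ_pred_eq_of_pos hq).symm⟩
  have hlow : ∀ j : ℕ, a ^ (b ^ j) ≤ lam a b j := lam_lower ha2 hb1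
  have hup : ∀ j : ℕ, lam a b j ≤ 170 * a ^ (b ^ j) := lam_upper ha2 hb1
  have hX2 : ∀ j : ℕ, (2:ℝ) ≤ a ^ (b ^ j) := X_ge_two ha2 hb1
  have hXpos : ∀ j : ℕ, (0:ℝ) < a ^ (b ^ j) := fun j => lt_of_lt_of_le two_pos (hX2 j)
  have hlpos : ∀ j : ℕ, 0 < lam a b j := lam_pos ha2 hb1
  show lam a b n * lam a b (n+1) * del a b β n ^ ((1:ℝ)/2) <
      lam a b (n+2) * lam a b (n+3) * del a b β (n+2) ^ (-(1:ℝ)/2) * del a b β (n+3)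
  have hdelL : del a b β n ^ ((1:ℝ)/2) = lam a b n ^ (-β) := by
    rw [del, ← Real.rpow_mul (hlpos n).le]; congr 1; ring
  have hdelR : del a b β (n+2) ^ (-(1:ℝ)/2) = lam a b (n+2) ^ β := by
    rw [del, ← Real.rpow_mul (hlpos (n+2)).le]; congr 1; ring
  rw [hdelL, hdelR, del]
  -- upper bound for the left-hand side
  have hLHS : lam a b n * lam a b (n+1) * lam a b n ^ (-β)
      ≤ 170^2 * a ^ (b^n + b^(n+1) + b^n * (-β)) := by
    have h3 : lam a b n ^ (-β) ≤ (a ^ (b^n)) ^ (-β) :=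
      Real.rpow_le_rpow_of_nonpos (hXpos n) (hlow n) (by linarith)
    calc lam a b n * lam a b (n+1) * lam a b n ^ (-β)
        ≤ (170 * a ^ (b^n)) * (170 * a ^ (b^(n+1))) * (a ^ (b^n)) ^ (-β) := by
          apply mul_le_mul _ h3 (Real.rpow_nonneg (hlpos n).le _)
          · positivity
          · exact mul_le_mul (hup n) (hup (n+1)) (hlpos (n+1)).le (by positivity)
      _ = 170^2 * a ^ (b^n + b^(n+1) + b^n * (-β)) := by
          rw [rpow_sum3 ha0, Real.rpow_mul ha0.le]; ring
  -- lower bound for the right-hand side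
  have hRHS : (170:ℝ) ^ (-(2*β)) *
        a ^ (b^(n+2) + b^(n+3) + (b^(n+2) * β + b^(n+3) * (-(2*β))))
      ≤ lam a b (n+2) * lam a b (n+3) * lam a b (n+2) ^ β * lam a b (n+3) ^ (-(2*β)) := by
    have h1 : (a ^ (b^(n+2))) ^ β ≤ lam a b (n+2) ^ β :=
      Real.rpow_le_rpow (hXpos (n+2)).le (hlow (n+2)) hβ0.le
    have h2 : (170 * a ^ (b^(n+3))) ^ (-(2*β)) ≤ lam a b (n+3) ^ (-(2*β)) :=
      Real.rpow_le_rpow_of_nonpos (hlpos (n+3)) (hup (n+3)) (by linarith)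
    calc (170:ℝ) ^ (-(2*β)) *
          a ^ (b^(n+2) + b^(n+3) + (b^(n+2) * β + b^(n+3) * (-(2*β))))
        = a ^ (b^(n+2)) * a ^ (b^(n+3)) * (a ^ (b^(n+2))) ^ β *
            (170 * a ^ (b^(n+3))) ^ (-(2*β)) := by
          have e1 : (a ^ (b^(n+2))) ^ β = a ^ (b^(n+2) * β) :=
            (Real.rpow_mul ha0.le _ _).symm
          have e2 : (170 * a ^ (b^(n+3))) ^ (-(2*β))
              = (170:ℝ) ^ (-(2*β)) * a ^ (b^(n+3) * (-(2*β))) := by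
            rw [Real.mul_rpow (by norm_num) (Real.rpow_nonneg ha0.le _),
              ← Real.rpow_mul ha0.le]
          rw [e1, e2]
          simp only [Real.rpow_add ha0]
          ring
      _ ≤ lam a b (n+2) * lam a b (n+3) * lam a b (n+2) ^ β * lam a b (n+3) ^ (-(2*β)) := by
          apply mul_le_mul _ h2
            (Real.rpow_nonneg (mul_nonneg (by norm_num) (hXpos _).le) _)
            (mul_nonneg (mul_nonneg (hlpos _).le (hlpos _).le)
              (Real.rpow_nonneg (hlpos _).le _))
          apply mul_le_mul _ h1 (Real.rpow_nonneg (hXpos _).le _)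
            (mul_nonneg (hlpos _).le (hlpos _).le)
          exact mul_le_mul (hlow (n+2)) (hlow (n+3)) (hXpos _).le (hlpos _).le
  -- compare the two explicit bounds
  have hsplit : b^(n+2) + b^(n+3) + (b^(n+2) * β + b^(n+3) * (-(2*β)))
      = (b^n + b^(n+1) + b^n * (-β)) + b^n * ε := by
    rw [hεdef]; simp only [pow_add]; ring
  have h4 : (170:ℝ)^(4:ℝ) ≤ a ^ (b^n * ε) := by
    calc (170:ℝ)^(4:ℝ) = ((170:ℝ) ^ ((4:ℝ)/ε)) ^ ε := by
          rw [← Real.rpow_mul (by norm_num), div_mul_cancel₀ _ hεpos.ne']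
      _ ≤ a ^ ε := Real.rpow_le_rpow (Real.rpow_nonneg (by norm_num) _)
          (le_trans (le_max_right _ _) ha) hεpos.le
      _ ≤ a ^ (b^n * ε) := Real.rpow_le_rpow_of_exponent_le ha1.le
          (le_mul_of_one_le_left hεpos.le (one_le_pow₀ hb1))
  have hS : (170:ℝ)^2 < (170:ℝ) ^ (-(2*β)) * a ^ (b^n * ε) := by
    calc (170:ℝ)^2 = (170:ℝ)^((2:ℕ):ℝ) := (Real.rpow_natCast 170 2).symm
      _ < (170:ℝ) ^ (-(2*β) + 4) := by
          apply Real.rpow_lt_rpow_of_exponent_lt (by norm_num)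
          push_cast; linarith
      _ = (170:ℝ) ^ (-(2*β)) * (170:ℝ)^(4:ℝ) := Real.rpow_add (by norm_num) _ _
      _ ≤ (170:ℝ) ^ (-(2*β)) * a ^ (b^n * ε) :=
          mul_le_mul_of_nonneg_left h4 (Real.rpow_nonneg (by norm_num) _)
  calc lam a b n * lam a b (n+1) * lam a b n ^ (-β)
      ≤ 170^2 * a ^ (b^n + b^(n+1) + b^n * (-β)) := hLHS
    _ < ((170:ℝ) ^ (-(2*β)) * a ^ (b^n * ε)) * a ^ (b^n + b^(n+1) + b^n * (-β)) :=
        mul_lt_mul_of_pos_right hS (Real.rpow_pos_of_pos ha0 _)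
    _ = (170:ℝ) ^ (-(2*β)) *
          a ^ (b^(n+2) + b^(n+3) + (b^(n+2) * β + b^(n+3) * (-(2*β)))) := by
        rw [hsplit, Real.rpow_add ha0 (b^n + b^(n+1) + b^n * (-β)) (b^n * ε)]; ring
    _ ≤ lam a b (n+2) * lam a b (n+3) * lam a b (n+2) ^ β * lam a b (n+3) ^ (-(2*β)) := hRHS
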